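/- Hook formula for non-ambiguous trees: for every non-ambiguous tree A, one has N(A) · ∏_{v ∈ V_L} n_v · ∏_{v ∈ V_R} n_v = |V_L|! · |V_R|!, where N(A) is the number of non-ambiguous trees isomorphic to A and, for v in V_L (resp. V_R), n_v = #{u ∈ V_L (resp. u ∈ V_R) : v is an ancestor of u}, where the ancestor relation includes u = v. -/

import Mathlib

/-- A non-ambiguous tree: a finite set of points of `ℕ × ℕ`. -/
def IsNAT (A : Finset (ℕ × ℕ)) : Prop :=
  (0, 0) ∈ A ∧
  (∀ p ∈ A, p ≠ (0, 0) →
    Xor' (∃ q ∈ A, q.1 = p.1 ∧ q.2 < p.2) (∃ r ∈ A, r.2 = p.2 ∧ r.1 < p.1)) ∧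
  (∀ p ∈ A, (∀ x' < p.1, ∃ q ∈ A, q.1 = x') ∧ (∀ y' < p.2, ∃ q ∈ A, q.2 = y'))

/-- The set of left children of a non-ambiguous tree. -/
def VL (A : Finset (ℕ × ℕ)) : Set (ℕ × ℕ) :=
  {p | p ∈ A ∧ p ≠ (0, 0) ∧ ∃ r ∈ A, r.2 = p.2 ∧ r.1 < p.1}

/-- The set of right children of a non-ambiguous tree. -/
def VR (A : Finset (ℕ × ℕ)) : Set (ℕ × ℕ) :=
  {p | p ∈ A ∧ p ≠ (0, 0) ∧ ∃ q ∈ A, q.1 = p.1 ∧ q.2 < p.2}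

/-- `q` is the parent of `p`, with `p` a left child, in the non-ambiguous tree `A`. -/
def LeftParent (A : Finset (ℕ × ℕ)) (p q : ℕ × ℕ) : Prop :=
  p ∈ A ∧ q ∈ A ∧ q.2 = p.2 ∧ q.1 < p.1 ∧
    ∀ r ∈ A, r.2 = p.2 → r.1 < p.1 → r.1 ≤ q.1

/-- `q` is the parent of `p`, with `p` a right child, in the non-ambiguous tree `A`. -/
def RightParent (A : Finset (ℕ × ℕ)) (p q : ℕ × ℕ) : Prop :=
  p ∈ A ∧ q ∈ A ∧ q.1 = p.1 ∧ q.2 < p.2 ∧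
    ∀ r ∈ A, r.1 = p.1 → r.2 < p.2 → r.2 ≤ q.2

/-- `u` is an ancestor of `v` in `A` (reflexive-transitive closure of the
parent-to-child relation). -/
def Ancestor (A : Finset (ℕ × ℕ)) (u v : ℕ × ℕ) : Prop :=
  Relation.ReflTransGen (fun x y => LeftParent A y x ∨ RightParent A y x) u v

/-- Two non-ambiguous trees are isomorphic (have the same underlying binary tree). -/
def NATIso (A A' : Finset (ℕ × ℕ)) : Prop :=
  ∃ f : ℕ × ℕ → ℕ × ℕ, Set.BijOn f (↑A) (↑A') ∧ f (0, 0) = (0, 0) ∧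
    ∀ p ∈ A, ∀ q ∈ A,
      (LeftParent A p q ↔ LeftParent A' (f p) (f q)) ∧
      (RightParent A p q ↔ RightParent A' (f p) (f q))

/-- The number of non-ambiguous trees isomorphic to `A`. -/
noncomputable def NATcount (A : Finset (ℕ × ℕ)) : ℕ :=
  Set.ncard {A' : Finset (ℕ × ℕ) | IsNAT A' ∧ NATIso A A'}

/-- The left children of `A`, as a finset. -/
def VLf (A : Finset (ℕ × ℕ)) : Finset (ℕ × ℕ) :=
  A.filter (fun p => p ≠ (0, 0) ∧ ∃ r ∈ A, r.2 = p.2 ∧ r.1 < p.1)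

/-- The right children of `A`, as a finset. -/
def VRf (A : Finset (ℕ × ℕ)) : Finset (ℕ × ℕ) :=
  A.filter (fun p => p ≠ (0, 0) ∧ ∃ q ∈ A, q.1 = p.1 ∧ q.2 < p.2)

/-- The hook length of a vertex `v`: the number of left (resp. right) children of which
`v` is an ancestor (including `v` itself). -/
noncomputable def hookL (A : Finset (ℕ × ℕ)) (v : ℕ × ℕ) : ℕ :=
  Set.ncard {u : ℕ × ℕ | u ∈ VLf A ∧ Ancestor A v u}

noncomputable def hookR (A : Finset (ℕ × ℕ)) (v : ℕ × ℕ) : ℕ :=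
  Set.ncard {u : ℕ × ℕ | u ∈ VRf A ∧ Ancestor A v u}

/-!
The left children of a non-ambiguous tree `A` are the lowest points of its columns
`1, …, |V_L|`, one in each column, and its right children are the leftmost points of its rows
`1, …, |V_R|`. A tree isomorphic to `A` arises from `A` by moving its columns and its rows (an
isomorphism keeps right-child chains in a column and left-child chains in a row), so it is
determined by the new column of each left child and the new row of each right child. The
assignments that occur are exactly the pairs of increasing labellings of the forests `V_L` and
`V_R` under the ancestor order: the left children heading two columns that meet in a row are
comparable, and the order within that row must be kept. So `N(A)` is the product of the numbers
of increasing labellings of the two forests, and the hook length formula for forests, proved by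
removing the root labelled `1`, evaluates each of them.
-/

open Finset

section HookFormula

open Classical

variable {α : Type*}

structure IsIncreasingLabeling (r : α → α → Prop) (F : Finset α) (g : α → ℕ) : Prop where
  bijOn : Set.BijOn g F (Set.Icc 1 #F)
  monotone : ∀ ⦃u v⦄, u ∈ F → v ∈ F → r u v → g u ≤ g v
  /-- Normalises the junk values, so that a labelling is determined by its values on `F`. -/
  eq_zero : ∀ ⦃v⦄, v ∉ F → g v = 0

noncomputable def hook (r : α → α → Prop) (F : Finset α) (v : α) : ℕ := #{u ∈ F | r v u}

noncomputable def forestRoots (r : α → α → Prop) (F : Finset α) : Finset α :=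
  {x ∈ F | ∀ u ∈ F, r u x → u = x}

def IsForestOn (r : α → α → Prop) (F : Finset α) : Prop :=
  ∀ ⦃u v w⦄, u ∈ F → v ∈ F → w ∈ F → r u w → r v w → r u v ∨ r v u

variable {r : α → α → Prop} {F G : Finset α} {g : α → ℕ} {u v w x : α}

lemma IsForestOn.mono (hF : IsForestOn r F) (hG : G ⊆ F) : IsForestOn r G :=
  fun _ _ _ hu hv hw => hF (hG hu) (hG hv) (hG hw)

namespace IsIncreasingLabeling

lemma mem_Icc (hg : IsIncreasingLabeling r F g) (hv : v ∈ F) : g v ∈ Set.Icc 1 #F :=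
  hg.bijOn.mapsTo hv

lemma le_card (hg : IsIncreasingLabeling r F g) (v : α) : g v ≤ #F := by
  by_cases hv : v ∈ F
  · exact (hg.mem_Icc hv).2
  · simp [hg.eq_zero hv]

lemma injOn_insert (hg : IsIncreasingLabeling r F g) (hw : w ∉ F) :
    Set.InjOn g (insert w F) := by
  have hpos : ∀ v ∈ F, g w < g v := fun v hv => by
    rw [hg.eq_zero hw]; exact (hg.mem_Icc hv).1
  rintro u (rfl | hu) v (rfl | hv) huv
  · rfl
  · exact absurd huv (hpos v hv).ne
  · exact absurd huv (hpos u hu).ne'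
  · exact hg.bijOn.injOn hu hv huv

lemma lt_of_rel (hg : IsIncreasingLabeling r F g) (hv : v ∈ F) (huv : r u v) (hne : u ≠ v) :
    g u < g v := by
  by_cases hu : u ∈ F
  · exact (hg.monotone hu hv huv).lt_of_ne fun h => hne (hg.bijOn.injOn hu hv h)
  · rw [hg.eq_zero hu]; exact (hg.mem_Icc hv).1

lemma mem_forestRoots (hg : IsIncreasingLabeling r F g) (hx : x ∈ F) (h1 : g x = 1) :
    x ∈ forestRoots r F := by
  refine mem_filter.2 ⟨hx, fun u hu hux => hg.bijOn.injOn hu hx ?_⟩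
  have := hg.monotone hu hx hux
  have := (hg.mem_Icc hu).1
  omega

/-- Truncated subtraction sends the label `1` of `x`, and the zeros off `F`, to `0`. -/
lemma sub_one (hg : IsIncreasingLabeling r F g) (hx : x ∈ F) (h1 : g x = 1) :
    IsIncreasingLabeling r (F.erase x) (fun v => g v - 1) := by
  have hcard : #(F.erase x) = #F - 1 := card_erase_of_mem hx
  have two_le : ∀ v ∈ F.erase x, 2 ≤ g v := fun v hv => by
    obtain ⟨hvx, hv⟩ := mem_erase.1 hv
    have := (hg.mem_Icc hv).1
    have : g v ≠ g x := fun h => hvx (hg.bijOn.injOn hv hx h)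
    omega
  refine ⟨⟨fun v hv => ?_, fun u hu v hv huv => ?_, fun b hb => ?_⟩, ?_, fun v hv => ?_⟩
  · have := two_le v hv
    have := (hg.mem_Icc (mem_of_mem_erase hv)).2
    simp only [Set.mem_Icc]
    omega
  · have := two_le u hu
    have := two_le v hv
    exact hg.bijOn.injOn (mem_of_mem_erase hu) (mem_of_mem_erase hv) (by simp at huv; omega)
  · obtain ⟨v, hv, hgv⟩ := hg.bijOn.surjOn (show b + 1 ∈ Set.Icc 1 #F by
      simp only [Set.mem_Icc] at hb ⊢; omega)
    have hvx : v ≠ x := by rintro rfl; simp at hb; omega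
    exact ⟨v, mem_erase.2 ⟨hvx, hv⟩, by simp [hgv]⟩
  · exact fun u v hu hv huv =>
      Nat.sub_le_sub_right (hg.monotone (mem_of_mem_erase hu) (mem_of_mem_erase hv) huv) 1
  · by_cases hvx : v = x
    · simp [hvx, h1]
    · simp [hg.eq_zero fun h => hv (mem_erase.2 ⟨hvx, h⟩)]

lemma add_one (hg : IsIncreasingLabeling r (F.erase x) g) (hx : x ∈ forestRoots r F) :
    IsIncreasingLabeling r F (fun v => if v ∈ F then g v + 1 else 0) := by
  obtain ⟨hxF, hroot⟩ := mem_filter.1 hx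
  have hcard : #(F.erase x) = #F - 1 := card_erase_of_mem hxF
  have hgx : g x = 0 := hg.eq_zero (notMem_erase x F)
  have hinsert : insert x (F.erase x : Set α) = F := by rw [← coe_insert, insert_erase hxF]
  refine ⟨⟨fun v hv => ?_, fun u hu v hv huv => ?_, fun b hb => ?_⟩, ?_, fun v hv => if_neg hv⟩
  · have := hg.le_card v
    have := card_pos.2 ⟨x, hxF⟩
    simp only [Finset.mem_coe] at hv
    simp only [if_pos hv, Set.mem_Icc]
    omega
  · simp only [Finset.mem_coe] at hu hv
    simp only [if_pos hu, if_pos hv, add_left_inj] at huv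
    rw [← mem_coe, ← hinsert] at hu hv
    exact hg.injOn_insert (notMem_erase x F) hu hv huv
  · simp only [Set.mem_Icc] at hb
    obtain rfl | hb1 := eq_or_ne b 1
    · exact ⟨x, hxF, by simp [hxF, hgx]⟩
    obtain ⟨v, hv, hgv⟩ := hg.bijOn.surjOn (show b - 1 ∈ Set.Icc 1 #(F.erase x) by
      simp only [Set.mem_Icc]; omega)
    exact ⟨v, mem_of_mem_erase hv, by simp [mem_of_mem_erase hv, hgv]; omega⟩
  · intro u v hu hv huv
    simp only [if_pos hu, if_pos hv, add_le_add_iff_right]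
    obtain rfl | hux := eq_or_ne u x
    · simp [hgx]
    have hvx : v ≠ x := by rintro rfl; exact hux (hroot u hu huv)
    exact hg.monotone (mem_erase.2 ⟨hux, hu⟩) (mem_erase.2 ⟨hvx, hv⟩) huv

end IsIncreasingLabeling

lemma finite_setOf_isIncreasingLabeling (r : α → α → Prop) (F : Finset α) :
    {g | IsIncreasingLabeling r F g}.Finite := by
  refine Set.Finite.of_finite_image (f := fun g (v : F) => g v)
    ((Set.Finite.pi fun _ => Set.finite_Iic #F).subset ?_) fun g hg g' hg' h => funext fun v => ?_
  · rintro _ ⟨g, hg, rfl⟩ v -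
    exact hg.le_card v
  · by_cases hv : v ∈ F
    · exact congrFun h ⟨v, hv⟩
    · rw [hg.eq_zero hv, hg'.eq_zero hv]

lemma ncard_isIncreasingLabeling_apply_eq_one (hx : x ∈ forestRoots r F) :
    {g | IsIncreasingLabeling r F g ∧ g x = 1}.ncard =
      {g | IsIncreasingLabeling r (F.erase x) g}.ncard := by
  have hxF : x ∈ F := (mem_filter.1 hx).1
  refine Set.ncard_congr (fun g _ v => g v - 1) (fun g hg => hg.1.sub_one hxF hg.2)
    (fun g g' hg hg' h => funext fun v => ?_) fun g hg => ?_
  · by_cases hv : v ∈ F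
    · have := (hg.1.mem_Icc hv).1
      have := (hg'.1.mem_Icc hv).1
      have := congrFun h v
      omega
    · rw [hg.1.eq_zero hv, hg'.1.eq_zero hv]
  · refine ⟨_, ⟨hg.add_one hx, by simp [hxF, hg.eq_zero (notMem_erase x F)]⟩, funext fun v => ?_⟩
    by_cases hv : v ∈ F
    · simp [hv]
    · simp [hv, hg.eq_zero fun h => hv (mem_of_mem_erase h)]

/-- Sorting the increasing labellings by the root that receives the label `1`. -/
lemma ncard_isIncreasingLabeling_eq_sum (hF : F.Nonempty) :
    {g | IsIncreasingLabeling r F g}.ncard =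
      ∑ x ∈ forestRoots r F, {g | IsIncreasingLabeling r (F.erase x) g}.ncard := by
  have hfin := finite_setOf_isIncreasingLabeling r F
  have hT : hfin.toFinset = (forestRoots r F).biUnion fun x => {g ∈ hfin.toFinset | g x = 1} := by
    ext g
    simp only [mem_biUnion, mem_filter, Set.Finite.mem_toFinset, Set.mem_ofPred_eq]
    refine ⟨fun hg => ?_, fun ⟨_, _, hg, _⟩ => hg⟩
    obtain ⟨x, hx, hgx⟩ := hg.bijOn.surjOn (show 1 ∈ Set.Icc 1 #F by simpa using hF.card_pos)
    exact ⟨x, hg.mem_forestRoots hx hgx, hg, hgx⟩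
  rw [Set.ncard_eq_toFinset_card _ hfin, hT, card_biUnion]
  · refine sum_congr rfl fun x hx => ?_
    rw [← ncard_isIncreasingLabeling_apply_eq_one hx, ← Set.ncard_coe_finset]
    congr 1
    ext g
    simp
  · intro x hx y hy hxy
    refine disjoint_left.2 fun g hgx hgy => hxy ?_
    simp only [mem_filter, Set.Finite.mem_toFinset] at hgx hgy
    exact hgx.1.bijOn.injOn (mem_filter.1 hx).1 (mem_filter.1 hy).1 (hgx.2.trans hgy.2.symm)

lemma hook_erase (hx : x ∈ forestRoots r F) (hv : v ∈ F.erase x) :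
    hook r (F.erase x) v = hook r F v := by
  unfold hook
  congr 1
  ext u
  simp only [mem_filter, mem_erase, and_congr_left_iff, and_iff_right_iff_imp]
  rintro hvu - rfl
  exact (mem_erase.1 hv).1 ((mem_filter.1 hx).2 v (mem_of_mem_erase hv) hvu)

variable [IsPartialOrder α r]

lemma exists_mem_forestRoots_rel (hw : w ∈ F) : ∃ x ∈ forestRoots r F, r x w := by
  obtain ⟨x, hx, hmin⟩ := exists_min_image {y ∈ F | r y w} (fun y => #{u ∈ F | r u y})
    ⟨w, mem_filter.2 ⟨hw, refl_of r w⟩⟩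
  obtain ⟨hxF, hxw⟩ := mem_filter.1 hx
  -- an ancestor `x` of `w` with the fewest ancestors is a root
  refine ⟨x, mem_filter.2 ⟨hxF, fun u hu hux => by_contra fun hne => ?_⟩, hxw⟩
  have hsub : {u' ∈ F | r u' u} ⊂ {u' ∈ F | r u' x} := by
    refine ssubset_iff_of_subset (fun u' hu' => ?_) |>.2 ⟨x, ?_, ?_⟩
    · simp only [mem_filter] at hu' ⊢
      exact ⟨hu'.1, trans_of r hu'.2 hux⟩
    · simpa using ⟨hxF, refl_of r x⟩
    · simp only [mem_filter, not_and]
      exact fun _ hxu => hne (antisymm_of r hux hxu)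
  exact (card_lt_card hsub).not_ge (hmin u (mem_filter.2 ⟨hu, trans_of r hux hxw⟩))

lemma sum_hook_forestRoots (hF : IsForestOn r F) : ∑ x ∈ forestRoots r F, hook r F x = #F := by
  have hF' : F = (forestRoots r F).biUnion fun x => {u ∈ F | r x u} := by
    ext w
    simp only [mem_biUnion, mem_filter]
    refine ⟨fun hw => ?_, fun ⟨_, _, hw, _⟩ => hw⟩
    obtain ⟨x, hx, hxw⟩ := exists_mem_forestRoots_rel (r := r) hw
    exact ⟨x, hx, hw, hxw⟩
  have hdisj : (forestRoots r F : Set α).PairwiseDisjoint fun x => {u ∈ F | r x u} := by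
    refine fun x hx y hy hxy => disjoint_left.2 fun u hxu hyu => ?_
    obtain ⟨hxF, hxroot⟩ := mem_filter.1 hx
    obtain ⟨hyF, hyroot⟩ := mem_filter.1 hy
    obtain ⟨huF, hxu⟩ := mem_filter.1 hxu
    rcases hF hxF hyF huF hxu (mem_filter.1 hyu).2 with h | h
    · exact hxy (hyroot x hxF h)
    · exact hxy (hxroot y hyF h).symm
  calc ∑ x ∈ forestRoots r F, hook r F x
      = #((forestRoots r F).biUnion fun x => {u ∈ F | r x u}) := (card_biUnion hdisj).symm
    _ = #F := by rw [← hF']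

theorem ncard_isIncreasingLabeling_mul_prod_hook (hF : IsForestOn r F) :
    {g | IsIncreasingLabeling r F g}.ncard * ∏ v ∈ F, hook r F v = (#F).factorial := by
  induction hn : #F generalizing F with
  | zero =>
    obtain rfl := card_eq_zero.1 hn
    have : {g | IsIncreasingLabeling r (∅ : Finset α) g} = {0} := by
      ext g
      refine ⟨fun hg => funext fun v => hg.eq_zero (notMem_empty v), ?_⟩
      rintro rfl
      exact ⟨by simp [Set.BijOn], by simp, fun _ _ => rfl⟩
    simp [this]
  | succ n ih =>
    have hIH : ∀ x ∈ forestRoots r F,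
        {g | IsIncreasingLabeling r (F.erase x) g}.ncard * ∏ v ∈ F.erase x, hook r F v
          = n.factorial := fun x hx => by
      have hxF := (mem_filter.1 hx).1
      rw [← ih (hF.mono (erase_subset x F)) (by rw [card_erase_of_mem hxF, hn]; rfl)]
      rw [prod_congr rfl fun v hv => (hook_erase hx hv).symm]
    calc {g | IsIncreasingLabeling r F g}.ncard * ∏ v ∈ F, hook r F v
        = ∑ x ∈ forestRoots r F, {g | IsIncreasingLabeling r (F.erase x) g}.ncard *
            (hook r F x * ∏ v ∈ F.erase x, hook r F v) := by
          rw [ncard_isIncreasingLabeling_eq_sum (card_pos.1 (by omega)), sum_mul]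
          exact sum_congr rfl fun x hx => by rw [mul_prod_erase _ _ (mem_filter.1 hx).1]
      _ = ∑ x ∈ forestRoots r F, n.factorial * hook r F x :=
          sum_congr rfl fun x hx => by rw [← hIH x hx]; ring
      _ = (n + 1).factorial := by
          rw [← mul_sum, sum_hook_forestRoots hF, hn, Nat.factorial_succ, mul_comm]

end HookFormula

section Tree

variable {A : Finset (ℕ × ℕ)} {p p' q q' u v w : ℕ × ℕ}

abbrev IsParent (A : Finset (ℕ × ℕ)) (p q : ℕ × ℕ) : Prop := LeftParent A p q ∨ RightParent A p q

def LeftAncestor (A : Finset (ℕ × ℕ)) : ℕ × ℕ → ℕ × ℕ → Prop :=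
  Relation.ReflTransGen fun x y => LeftParent A y x

def RightAncestor (A : Finset (ℕ × ℕ)) : ℕ × ℕ → ℕ × ℕ → Prop :=
  Relation.ReflTransGen fun x y => RightParent A y x

lemma IsParent.lt (h : IsParent A p q) : q < p := by
  rw [Prod.lt_iff]
  rcases h with ⟨-, -, h2, h1, -⟩ | ⟨-, -, h1, h2, -⟩ <;> omega

lemma Ancestor.le (h : Ancestor A u v) : u ≤ v := by
  induction h with
  | refl => exact le_rfl
  | tail _ hpar ih => exact ih.trans (IsParent.lt hpar).le

instance : IsPartialOrder (ℕ × ℕ) (Ancestor A) where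
  refl _ := Relation.ReflTransGen.refl
  trans _ _ _ := Relation.ReflTransGen.trans
  antisymm _ _ h h' := le_antisymm h.le h'.le

lemma LeftAncestor.ancestor (h : LeftAncestor A u v) : Ancestor A u v :=
  Relation.ReflTransGen.mono (fun _ _ => Or.inl) _ _ h

lemma RightAncestor.ancestor (h : RightAncestor A u v) : Ancestor A u v :=
  Relation.ReflTransGen.mono (fun _ _ => Or.inr) _ _ h

lemma LeftAncestor.snd_eq (h : LeftAncestor A u v) : u.2 = v.2 := by
  induction h with
  | refl => rfl
  | tail _ hpar ih => exact ih.trans hpar.2.2.1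

lemma RightAncestor.fst_eq (h : RightAncestor A u v) : u.1 = v.1 := by
  induction h with
  | refl => rfl
  | tail _ hpar ih => exact ih.trans hpar.2.2.1

lemma LeftParent.parent_unique (h : LeftParent A p q) (h' : LeftParent A p q') : q = q' := by
  obtain ⟨-, hq, hq2, hq1, hmax⟩ := h
  obtain ⟨-, hq', hq2', hq1', hmax'⟩ := h'
  have := hmax q' hq' hq2' hq1'
  have := hmax' q hq hq2 hq1
  exact Prod.ext (by omega) (by omega)

lemma RightParent.parent_unique (h : RightParent A p q) (h' : RightParent A p q') : q = q' := by
  obtain ⟨-, hq, hq1, hq2, hmax⟩ := h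
  obtain ⟨-, hq', hq1', hq2', hmax'⟩ := h'
  have := hmax q' hq' hq1' hq2'
  have := hmax' q hq hq1 hq2
  exact Prod.ext (by omega) (by omega)

lemma LeftParent.child_unique (h : LeftParent A p q) (h' : LeftParent A p' q) : p = p' := by
  obtain ⟨hp, -, hq2, hq1, hmax⟩ := h
  obtain ⟨hp', -, hq2', hq1', hmax'⟩ := h'
  rcases lt_trichotomy p.1 p'.1 with hlt | heq | hlt
  · have := hmax' p hp (by omega) hlt; omega
  · exact Prod.ext heq (by omega)
  · have := hmax p' hp' (by omega) hlt; omega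

lemma RightParent.child_unique (h : RightParent A p q) (h' : RightParent A p' q) : p = p' := by
  obtain ⟨hp, -, hq1, hq2, hmax⟩ := h
  obtain ⟨hp', -, hq1', hq2', hmax'⟩ := h'
  rcases lt_trichotomy p.2 p'.2 with hlt | heq | hlt
  · have := hmax' p hp (by omega) hlt; omega
  · exact Prod.ext (by omega) heq
  · have := hmax p' hp' (by omega) hlt; omega

lemma LeftParent.not_rightParent (hA : IsNAT A) (h : LeftParent A p q) :
    ¬RightParent A p q' := by
  rintro ⟨-, hq', hq1', hq2', -⟩
  obtain ⟨hp, hq, hq2, hq1, -⟩ := h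
  have hp0 : p ≠ (0, 0) := by rintro rfl; simp at hq1
  rcases hA.2.1 p hp hp0 with ⟨-, hn⟩ | ⟨-, hn⟩
  · exact hn ⟨q, hq, hq2, hq1⟩
  · exact hn ⟨q', hq', hq1', hq2'⟩

lemma IsParent.unique (hA : IsNAT A) (h : IsParent A p q) (h' : IsParent A p q') : q = q' := by
  rcases h with h | h <;> rcases h' with h' | h'
  · exact h.parent_unique h'
  · exact absurd h' (h.not_rightParent hA)
  · exact absurd h (h'.not_rightParent hA)
  · exact h.parent_unique h'

lemma exists_leftParent (hv : v ∈ A) (hu : u ∈ A) (h2 : u.2 = v.2) (h1 : u.1 < v.1) :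
    ∃ q, LeftParent A v q ∧ u.1 ≤ q.1 := by
  obtain ⟨q, hq, hmax⟩ := exists_max_image {s ∈ A | s.2 = v.2 ∧ s.1 < v.1} Prod.fst
    ⟨u, mem_filter.2 ⟨hu, h2, h1⟩⟩
  simp only [mem_filter] at hq hmax
  exact ⟨q, ⟨hv, hq.1, hq.2.1, hq.2.2, fun s hs hs2 hs1 => hmax s ⟨hs, hs2, hs1⟩⟩,
    hmax u ⟨hu, h2, h1⟩⟩

lemma exists_rightParent (hv : v ∈ A) (hu : u ∈ A) (h1 : u.1 = v.1) (h2 : u.2 < v.2) :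
    ∃ q, RightParent A v q ∧ u.2 ≤ q.2 := by
  obtain ⟨q, hq, hmax⟩ := exists_max_image {s ∈ A | s.1 = v.1 ∧ s.2 < v.2} Prod.snd
    ⟨u, mem_filter.2 ⟨hu, h1, h2⟩⟩
  simp only [mem_filter] at hq hmax
  exact ⟨q, ⟨hv, hq.1, hq.2.1, hq.2.2, fun s hs hs1 hs2 => hmax s ⟨hs, hs1, hs2⟩⟩,
    hmax u ⟨hu, h1, h2⟩⟩

lemma exists_isParent (hA : IsNAT A) (hp : p ∈ A) (hp0 : p ≠ (0, 0)) : ∃ q, IsParent A p q := by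
  rcases hA.2.1 p hp hp0 with ⟨⟨u, hu, h1, h2⟩, -⟩ | ⟨⟨u, hu, h2, h1⟩, -⟩
  · obtain ⟨q, hq, -⟩ := exists_rightParent hp hu h1 h2
    exact ⟨q, Or.inr hq⟩
  · obtain ⟨q, hq, -⟩ := exists_leftParent hp hu h2 h1
    exact ⟨q, Or.inl hq⟩

lemma leftAncestor_of_snd_eq (hu : u ∈ A) (hv : v ∈ A) (h2 : u.2 = v.2) (h1 : u.1 ≤ v.1) :
    LeftAncestor A u v := by
  induction v using WellFoundedLT.induction with
  | _ v ih =>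
    obtain h1 | h1 := h1.eq_or_lt
    · obtain rfl : u = v := Prod.ext h1 h2
      exact Relation.ReflTransGen.refl
    obtain ⟨q, hq, huq⟩ := exists_leftParent hv hu h2 h1
    exact (ih q (IsParent.lt (Or.inl hq)) hq.2.1 (h2.trans hq.2.2.1.symm) huq).tail hq

lemma rightAncestor_of_fst_eq (hu : u ∈ A) (hv : v ∈ A) (h1 : u.1 = v.1) (h2 : u.2 ≤ v.2) :
    RightAncestor A u v := by
  induction v using WellFoundedLT.induction with
  | _ v ih =>
    obtain h2 | h2 := h2.eq_or_lt
    · obtain rfl : u = v := Prod.ext h1 h2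
      exact Relation.ReflTransGen.refl
    obtain ⟨q, hq, huq⟩ := exists_rightParent hv hu h1 h2
    exact (ih q (IsParent.lt (Or.inr hq)) hq.2.1 (h1.trans hq.2.2.1.symm) huq).tail hq

lemma ancestor_root (hA : IsNAT A) (hp : p ∈ A) : Ancestor A (0, 0) p := by
  induction p using WellFoundedLT.induction with
  | _ p ih =>
    obtain rfl | hp0 := eq_or_ne p (0, 0)
    · exact Relation.ReflTransGen.refl
    obtain ⟨q, hq⟩ := exists_isParent hA hp hp0
    exact (ih q (IsParent.lt hq) (hq.elim (·.2.1) (·.2.1))).tail hq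

lemma Ancestor.total_of_ancestor (hA : IsNAT A) (hu : Ancestor A u w) (hv : Ancestor A v w) :
    Ancestor A u v ∨ Ancestor A v u := by
  induction hu generalizing v with
  | refl => exact Or.inr hv
  | tail hu hpar ih =>
    rcases Relation.ReflTransGen.cases_tail hv with rfl | ⟨c, hv, hpar'⟩
    · exact Or.inl (hu.tail hpar)
    · exact ih ((IsParent.unique hA hpar hpar') ▸ hv)

lemma isForestOn_ancestor (hA : IsNAT A) (F : Finset (ℕ × ℕ)) : IsForestOn (Ancestor A) F :=
  fun _ _ _ _ _ _ hu hv => hu.total_of_ancestor hA hv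

end Tree

section ColumnsAndRows

variable {A : Finset (ℕ × ℕ)} {p q v : ℕ × ℕ} {x y : ℕ}

/-- Junk (as `sInf ∅ = 0`) unless column `x` of `A` is nonempty. -/
noncomputable def colMin (A : Finset (ℕ × ℕ)) (x : ℕ) : ℕ × ℕ := (x, sInf {y | (x, y) ∈ A})

/-- Junk (as `sInf ∅ = 0`) unless row `y` of `A` is nonempty. -/
noncomputable def rowMin (A : Finset (ℕ × ℕ)) (y : ℕ) : ℕ × ℕ := (sInf {x | (x, y) ∈ A}, y)

@[simp] lemma colMin_fst : (colMin A x).1 = x := rfl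

@[simp] lemma rowMin_snd : (rowMin A y).2 = y := rfl

lemma colMin_mem (hp : p ∈ A) : colMin A p.1 ∈ A :=
  Nat.sInf_mem (s := {y | (p.1, y) ∈ A}) ⟨p.2, hp⟩

lemma rowMin_mem (hp : p ∈ A) : rowMin A p.2 ∈ A :=
  Nat.sInf_mem (s := {x | (x, p.2) ∈ A}) ⟨p.1, hp⟩

lemma colMin_snd_le (hp : p ∈ A) : (colMin A p.1).2 ≤ p.2 := Nat.sInf_le hp

lemma rowMin_fst_le (hp : p ∈ A) : (rowMin A p.2).1 ≤ p.1 := Nat.sInf_le hp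

lemma colMin_zero (hA : IsNAT A) : colMin A 0 = (0, 0) :=
  Prod.ext rfl (Nat.le_zero.1 (colMin_snd_le hA.1))

lemma rowMin_zero (hA : IsNAT A) : rowMin A 0 = (0, 0) :=
  Prod.ext (Nat.le_zero.1 (rowMin_fst_le hA.1)) rfl

lemma rightAncestor_colMin (hp : p ∈ A) : RightAncestor A (colMin A p.1) p :=
  rightAncestor_of_fst_eq (colMin_mem hp) hp rfl (colMin_snd_le hp)

lemma leftAncestor_rowMin (hp : p ∈ A) : LeftAncestor A (rowMin A p.2) p :=
  leftAncestor_of_snd_eq (rowMin_mem hp) hp rfl (rowMin_fst_le hp)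

lemma root_notMem_VLf : (0, 0) ∉ VLf A := by simp [VLf]

lemma root_notMem_VRf : (0, 0) ∉ VRf A := by simp [VRf]

lemma mem_VLf_iff_exists_leftParent : v ∈ VLf A ↔ ∃ q, LeftParent A v q := by
  refine ⟨fun hv => ?_, fun ⟨q, hq⟩ => ?_⟩
  · obtain ⟨hv, -, u, hu, h2, h1⟩ := mem_filter.1 hv
    obtain ⟨q, hq, -⟩ := exists_leftParent hv hu h2 h1
    exact ⟨q, hq⟩
  · obtain ⟨hv, hq, h2, h1, -⟩ := hq
    exact mem_filter.2 ⟨hv, by rintro rfl; simp at h1, q, hq, h2, h1⟩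

lemma mem_VRf_iff_exists_rightParent : v ∈ VRf A ↔ ∃ q, RightParent A v q := by
  refine ⟨fun hv => ?_, fun ⟨q, hq⟩ => ?_⟩
  · obtain ⟨hv, -, u, hu, h1, h2⟩ := mem_filter.1 hv
    obtain ⟨q, hq, -⟩ := exists_rightParent hv hu h1 h2
    exact ⟨q, hq⟩
  · obtain ⟨hv, hq, h1, h2, -⟩ := hq
    exact mem_filter.2 ⟨hv, by rintro rfl; simp at h2, q, hq, h1, h2⟩

/-- Nothing lies below it, so by non-ambiguity something lies to its left. -/
lemma colMin_mem_VLf (hA : IsNAT A) (hp : p ∈ A) (hx : 0 < p.1) : colMin A p.1 ∈ VLf A := by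
  have ht0 : colMin A p.1 ≠ (0, 0) := fun h => hx.ne' (by simpa using congrArg Prod.fst h)
  refine mem_filter.2 ⟨colMin_mem hp, ht0, ?_⟩
  rcases hA.2.1 _ (colMin_mem hp) ht0 with ⟨⟨q, hq, h1, h2⟩, -⟩ | ⟨h, -⟩
  · have := colMin_snd_le hq
    simp only [h1, colMin_fst] at this
    omega
  · exact h

lemma rowMin_mem_VRf (hA : IsNAT A) (hp : p ∈ A) (hy : 0 < p.2) : rowMin A p.2 ∈ VRf A := by
  have ht0 : rowMin A p.2 ≠ (0, 0) := fun h => hy.ne' (by simpa using congrArg Prod.snd h)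
  refine mem_filter.2 ⟨rowMin_mem hp, ht0, ?_⟩
  rcases hA.2.1 _ (rowMin_mem hp) ht0 with ⟨h, -⟩ | ⟨⟨q, hq, h2, h1⟩, -⟩
  · exact h
  · have := rowMin_fst_le hq
    simp only [h2, rowMin_snd] at this
    omega

lemma colMin_mem_insert_VLf (hA : IsNAT A) (hp : p ∈ A) :
    colMin A p.1 ∈ insert (0, 0) (VLf A : Set (ℕ × ℕ)) := by
  obtain hx | hx := Nat.eq_zero_or_pos p.1
  · exact Or.inl (by rw [hx, colMin_zero hA])
  · exact Or.inr (colMin_mem_VLf hA hp hx)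

lemma rowMin_mem_insert_VRf (hA : IsNAT A) (hp : p ∈ A) :
    rowMin A p.2 ∈ insert (0, 0) (VRf A : Set (ℕ × ℕ)) := by
  obtain hy | hy := Nat.eq_zero_or_pos p.2
  · exact Or.inl (by rw [hy, rowMin_zero hA])
  · exact Or.inr (rowMin_mem_VRf hA hp hy)

/-- A point below it would make it a right child too. -/
lemma colMin_eq_of_mem_VLf (hA : IsNAT A) (hv : v ∈ VLf A) : colMin A v.1 = v := by
  obtain ⟨hvA, hv0, u, hu, h2, h1⟩ := mem_filter.1 hv
  refine Prod.ext rfl ((colMin_snd_le hvA).eq_or_lt.resolve_right fun hlt => ?_)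
  rcases hA.2.1 v hvA hv0 with ⟨-, hn⟩ | ⟨-, hn⟩
  · exact hn ⟨u, hu, h2, h1⟩
  · exact hn ⟨_, colMin_mem hvA, rfl, hlt⟩

lemma rowMin_eq_of_mem_VRf (hA : IsNAT A) (hv : v ∈ VRf A) : rowMin A v.2 = v := by
  obtain ⟨hvA, hv0, u, hu, h1, h2⟩ := mem_filter.1 hv
  refine Prod.ext ((rowMin_fst_le hvA).eq_or_lt.resolve_right fun hlt => ?_) rfl
  rcases hA.2.1 v hvA hv0 with ⟨-, hn⟩ | ⟨-, hn⟩
  · exact hn ⟨_, rowMin_mem hvA, rfl, hlt⟩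
  · exact hn ⟨u, hu, h1, h2⟩

/-- The columns of a non-ambiguous tree are `0, …, m`, and each column `x ≥ 1` has exactly one
left child, its lowest point. -/
lemma bijOn_fst_VLf (hA : IsNAT A) :
    Set.BijOn Prod.fst (VLf A : Set (ℕ × ℕ)) (Set.Icc 1 #(VLf A)) := by
  have hinj : Set.InjOn Prod.fst (VLf A : Set (ℕ × ℕ)) := fun a ha b hb hab => by
    rw [← colMin_eq_of_mem_VLf hA ha, ← colMin_eq_of_mem_VLf hA hb, hab]
  obtain ⟨m, hmA, hmax⟩ := exists_max_image A Prod.fst ⟨_, hA.1⟩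
  have himage : Prod.fst '' (VLf A : Set (ℕ × ℕ)) = Set.Icc 1 m.1 := by
    ext x
    refine ⟨?_, fun hx => ?_⟩
    · rintro ⟨v, hv, rfl⟩
      obtain ⟨hvA, -, u, -, -, hu⟩ := mem_filter.1 hv
      exact ⟨by omega, hmax v hvA⟩
    · obtain ⟨q, hq, rfl⟩ : ∃ q ∈ A, q.1 = x := by
        obtain hxm | hxm := hx.2.eq_or_lt
        · exact ⟨m, hmA, hxm.symm⟩
        · exact (hA.2.2 m hmA).1 x hxm
      exact ⟨_, colMin_mem_VLf hA hq hx.1, rfl⟩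
  have hcard : #(VLf A) = m.1 := by
    rw [← Set.ncard_coe_finset, ← hinj.ncard_image, himage, ← Finset.coe_Icc,
      Set.ncard_coe_finset, Nat.card_Icc, Nat.add_sub_cancel]
  rw [hcard, ← himage]
  exact hinj.bijOn_image

lemma bijOn_snd_VRf (hA : IsNAT A) :
    Set.BijOn Prod.snd (VRf A : Set (ℕ × ℕ)) (Set.Icc 1 #(VRf A)) := by
  have hinj : Set.InjOn Prod.snd (VRf A : Set (ℕ × ℕ)) := fun a ha b hb hab => by
    rw [← rowMin_eq_of_mem_VRf hA ha, ← rowMin_eq_of_mem_VRf hA hb, hab]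
  obtain ⟨m, hmA, hmax⟩ := exists_max_image A Prod.snd ⟨_, hA.1⟩
  have himage : Prod.snd '' (VRf A : Set (ℕ × ℕ)) = Set.Icc 1 m.2 := by
    ext y
    refine ⟨?_, fun hy => ?_⟩
    · rintro ⟨v, hv, rfl⟩
      obtain ⟨hvA, -, u, -, -, hu⟩ := mem_filter.1 hv
      exact ⟨by omega, hmax v hvA⟩
    · obtain ⟨q, hq, rfl⟩ : ∃ q ∈ A, q.2 = y := by
        obtain hym | hym := hy.2.eq_or_lt
        · exact ⟨m, hmA, hym.symm⟩
        · exact (hA.2.2 m hmA).2 y hym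
      exact ⟨_, rowMin_mem_VRf hA hq hy.1, rfl⟩
  have hcard : #(VRf A) = m.2 := by
    rw [← Set.ncard_coe_finset, ← hinj.ncard_image, himage, ← Finset.coe_Icc,
      Set.ncard_coe_finset, Nat.card_Icc, Nat.add_sub_cancel]
  rw [hcard, ← himage]
  exact hinj.bijOn_image

end ColumnsAndRows

section Transport

variable {A : Finset (ℕ × ℕ)} {f : ℕ × ℕ → ℕ × ℕ} {p q : ℕ × ℕ}

structure PreservesRows (A : Finset (ℕ × ℕ)) (f : ℕ × ℕ → ℕ × ℕ) : Prop where
  snd_eq_iff : ∀ ⦃p q⦄, p ∈ A → q ∈ A → ((f p).2 = (f q).2 ↔ p.2 = q.2)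
  fst_lt : ∀ ⦃p q⦄, p ∈ A → q ∈ A → p.2 = q.2 → p.1 < q.1 → (f p).1 < (f q).1

structure PreservesColumns (A : Finset (ℕ × ℕ)) (f : ℕ × ℕ → ℕ × ℕ) : Prop where
  fst_eq_iff : ∀ ⦃p q⦄, p ∈ A → q ∈ A → ((f p).1 = (f q).1 ↔ p.1 = q.1)
  snd_lt : ∀ ⦃p q⦄, p ∈ A → q ∈ A → p.1 = q.1 → p.2 < q.2 → (f p).2 < (f q).2

namespace PreservesRows

lemma fst_lt_iff (hf : PreservesRows A f) (hp : p ∈ A) (hq : q ∈ A) (h : p.2 = q.2) :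
    (f p).1 < (f q).1 ↔ p.1 < q.1 := by
  refine ⟨fun hlt => ?_, hf.fst_lt hp hq h⟩
  rcases lt_trichotomy p.1 q.1 with h1 | h1 | h1
  · exact h1
  · obtain rfl : p = q := Prod.ext h1 h
    exact absurd hlt (lt_irrefl _)
  · exact absurd (hf.fst_lt hq hp h.symm h1) hlt.not_gt

lemma injOn (hf : PreservesRows A f) : Set.InjOn f A := fun p hp q hq h => by
  have h2 : p.2 = q.2 := (hf.snd_eq_iff hp hq).1 (congrArg Prod.snd h)
  have hpq := hf.fst_lt_iff hp hq h2
  have hqp := hf.fst_lt_iff hq hp h2.symm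
  rw [h, lt_self_iff_false, false_iff, not_lt] at hpq hqp
  exact Prod.ext (le_antisymm hqp hpq) h2

lemma exists_left_iff (hf : PreservesRows A f) (hp : p ∈ A) :
    (∃ r ∈ A.image f, r.2 = (f p).2 ∧ r.1 < (f p).1) ↔ ∃ r ∈ A, r.2 = p.2 ∧ r.1 < p.1 := by
  simp only [mem_image, exists_exists_and_eq_and]
  refine exists_congr fun r => and_congr_right fun hr => ?_
  rw [hf.snd_eq_iff hr hp]
  exact and_congr_right (hf.fst_lt_iff hr hp)

lemma leftParent_iff (hf : PreservesRows A f) (hp : p ∈ A) (hq : q ∈ A) :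
    LeftParent (A.image f) (f p) (f q) ↔ LeftParent A p q := by
  simp only [LeftParent, mem_image_of_mem f hp, mem_image_of_mem f hq, hp, hq, true_and,
    forall_mem_image, hf.snd_eq_iff hq hp]
  refine and_congr_right fun h => ?_
  rw [hf.fst_lt_iff hq hp h]
  refine and_congr_right fun _ => forall₂_congr fun r hr => ?_
  rw [hf.snd_eq_iff hr hp]
  refine imp_congr_right fun hrp => ?_
  rw [hf.fst_lt_iff hr hp hrp, ← not_lt, ← not_lt, hf.fst_lt_iff hq hr (h.trans hrp.symm)]

end PreservesRows

namespace PreservesColumns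

lemma snd_lt_iff (hf : PreservesColumns A f) (hp : p ∈ A) (hq : q ∈ A) (h : p.1 = q.1) :
    (f p).2 < (f q).2 ↔ p.2 < q.2 := by
  refine ⟨fun hlt => ?_, hf.snd_lt hp hq h⟩
  rcases lt_trichotomy p.2 q.2 with h2 | h2 | h2
  · exact h2
  · obtain rfl : p = q := Prod.ext h h2
    exact absurd hlt (lt_irrefl _)
  · exact absurd (hf.snd_lt hq hp h.symm h2) hlt.not_gt

lemma exists_below_iff (hf : PreservesColumns A f) (hp : p ∈ A) :
    (∃ r ∈ A.image f, r.1 = (f p).1 ∧ r.2 < (f p).2) ↔ ∃ r ∈ A, r.1 = p.1 ∧ r.2 < p.2 := by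
  simp only [mem_image, exists_exists_and_eq_and]
  refine exists_congr fun r => and_congr_right fun hr => ?_
  rw [hf.fst_eq_iff hr hp]
  exact and_congr_right (hf.snd_lt_iff hr hp)

lemma rightParent_iff (hf : PreservesColumns A f) (hp : p ∈ A) (hq : q ∈ A) :
    RightParent (A.image f) (f p) (f q) ↔ RightParent A p q := by
  simp only [RightParent, mem_image_of_mem f hp, mem_image_of_mem f hq, hp, hq, true_and,
    forall_mem_image, hf.fst_eq_iff hq hp]
  refine and_congr_right fun h => ?_
  rw [hf.snd_lt_iff hq hp h]
  refine and_congr_right fun _ => forall₂_congr fun r hr => ?_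
  rw [hf.fst_eq_iff hr hp]
  refine imp_congr_right fun hrp => ?_
  rw [hf.snd_lt_iff hr hp hrp, ← not_lt, ← not_lt, hf.snd_lt_iff hq hr (h.trans hrp.symm)]

end PreservesColumns

lemma isNAT_image (hA : IsNAT A) (hrow : PreservesRows A f) (hcol : PreservesColumns A f)
    (hroot : f (0, 0) = (0, 0))
    (hfst : ∀ p ∈ A, ∀ x < (f p).1, ∃ q ∈ A, (f q).1 = x)
    (hsnd : ∀ p ∈ A, ∀ y < (f p).2, ∃ q ∈ A, (f q).2 = y) : IsNAT (A.image f) := by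
  refine ⟨hroot ▸ mem_image_of_mem f hA.1, ?_, ?_⟩
  · simp only [forall_mem_image]
    intro p hp hp0
    rw [hcol.exists_below_iff hp, hrow.exists_left_iff hp]
    exact hA.2.1 p hp (by rintro rfl; exact hp0 hroot)
  · simp only [forall_mem_image, exists_mem_image]
    exact fun p hp => ⟨hfst p hp, hsnd p hp⟩

lemma natIso_image (hrow : PreservesRows A f) (hcol : PreservesColumns A f)
    (hroot : f (0, 0) = (0, 0)) : NATIso A (A.image f) :=
  ⟨f, coe_image (f := f) ▸ hrow.injOn.bijOn_image, hroot, fun _ hp _ hq =>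
    ⟨(hrow.leftParent_iff hp hq).symm, (hcol.rightParent_iff hp hq).symm⟩⟩

end Transport

section Relabel

variable {A : Finset (ℕ × ℕ)} {gl gr : ℕ × ℕ → ℕ} {p q v : ℕ × ℕ} {x y : ℕ}

/-- Moves each column `x ≥ 1` to the position `gl` assigns to its left child `colMin A x`, and
each row `y ≥ 1` to the position `gr` assigns to its right child `rowMin A y`. -/
noncomputable def relabel (A : Finset (ℕ × ℕ)) (gl gr : ℕ × ℕ → ℕ) (p : ℕ × ℕ) : ℕ × ℕ :=
  (gl (colMin A p.1), gr (rowMin A p.2))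

lemma ancestor_colMin_colMin (hA : IsNAT A) (hp : p ∈ A) (hq : q ∈ A) (h2 : p.2 = q.2)
    (h1 : p.1 < q.1) : Ancestor A (colMin A p.1) (colMin A q.1) := by
  have hpq : Ancestor A (colMin A p.1) q :=
    (rightAncestor_colMin hp).ancestor.trans (leftAncestor_of_snd_eq hp hq h2 h1.le).ancestor
  refine (hpq.total_of_ancestor hA (rightAncestor_colMin hq).ancestor).resolve_right fun h => ?_
  have := (Prod.le_def.1 h.le).1
  simp only [colMin_fst] at this
  omega

lemma ancestor_rowMin_rowMin (hA : IsNAT A) (hp : p ∈ A) (hq : q ∈ A) (h1 : p.1 = q.1)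
    (h2 : p.2 < q.2) : Ancestor A (rowMin A p.2) (rowMin A q.2) := by
  have hpq : Ancestor A (rowMin A p.2) q :=
    (leftAncestor_rowMin hp).ancestor.trans (rightAncestor_of_fst_eq hp hq h1 h2.le).ancestor
  refine (hpq.total_of_ancestor hA (leftAncestor_rowMin hq).ancestor).resolve_right fun h => ?_
  have := (Prod.le_def.1 h.le).2
  simp only [rowMin_snd] at this
  omega

lemma preservesRows_relabel (hA : IsNAT A) (hgl : IsIncreasingLabeling (Ancestor A) (VLf A) gl)
    (hgr : IsIncreasingLabeling (Ancestor A) (VRf A) gr) :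
    PreservesRows A (relabel A gl gr) where
  snd_eq_iff p q hp hq := ⟨fun h => by
    simpa using congrArg Prod.snd (hgr.injOn_insert root_notMem_VRf
      (rowMin_mem_insert_VRf hA hp) (rowMin_mem_insert_VRf hA hq) h), fun h => by
    simp [relabel, h]⟩
  fst_lt p q hp hq h2 h1 := hgl.lt_of_rel (colMin_mem_VLf hA hq (by omega))
    (ancestor_colMin_colMin hA hp hq h2 h1) fun h => h1.ne (by simpa using congrArg Prod.fst h)

lemma preservesColumns_relabel (hA : IsNAT A) (hgl : IsIncreasingLabeling (Ancestor A) (VLf A) gl)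
    (hgr : IsIncreasingLabeling (Ancestor A) (VRf A) gr) :
    PreservesColumns A (relabel A gl gr) where
  fst_eq_iff p q hp hq := ⟨fun h => by
    simpa using congrArg Prod.fst (hgl.injOn_insert root_notMem_VLf
      (colMin_mem_insert_VLf hA hp) (colMin_mem_insert_VLf hA hq) h), fun h => by
    simp [relabel, h]⟩
  snd_lt p q hp hq h1 h2 := hgr.lt_of_rel (rowMin_mem_VRf hA hq (by omega))
    (ancestor_rowMin_rowMin hA hp hq h1 h2) fun h => h2.ne (by simpa using congrArg Prod.snd h)

lemma relabel_root (hA : IsNAT A) (hgl : IsIncreasingLabeling (Ancestor A) (VLf A) gl)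
    (hgr : IsIncreasingLabeling (Ancestor A) (VRf A) gr) : relabel A gl gr (0, 0) = (0, 0) := by
  simp [relabel, colMin_zero hA, rowMin_zero hA, hgl.eq_zero root_notMem_VLf,
    hgr.eq_zero root_notMem_VRf]

lemma relabel_fst_of_mem_VLf (hA : IsNAT A) (hv : v ∈ VLf A) : (relabel A gl gr v).1 = gl v := by
  simp [relabel, colMin_eq_of_mem_VLf hA hv]

lemma relabel_snd_of_mem_VRf (hA : IsNAT A) (hv : v ∈ VRf A) : (relabel A gl gr v).2 = gr v := by
  simp [relabel, rowMin_eq_of_mem_VRf hA hv]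

lemma exists_relabel_fst_eq (hA : IsNAT A) (hgl : IsIncreasingLabeling (Ancestor A) (VLf A) gl)
    (hx : x < (relabel A gl gr p).1) :
    ∃ q ∈ A, (relabel A gl gr q).1 = x := by
  obtain rfl | hx0 := Nat.eq_zero_or_pos x
  · exact ⟨(0, 0), hA.1, by simp [relabel, colMin_zero hA, hgl.eq_zero root_notMem_VLf]⟩
  · obtain ⟨v, hv, rfl⟩ := hgl.bijOn.surjOn ⟨hx0, hx.le.trans (hgl.le_card _)⟩
    exact ⟨v, (mem_filter.1 hv).1, relabel_fst_of_mem_VLf hA hv⟩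

lemma exists_relabel_snd_eq (hA : IsNAT A) (hgr : IsIncreasingLabeling (Ancestor A) (VRf A) gr)
    (hy : y < (relabel A gl gr p).2) :
    ∃ q ∈ A, (relabel A gl gr q).2 = y := by
  obtain rfl | hy0 := Nat.eq_zero_or_pos y
  · exact ⟨(0, 0), hA.1, by simp [relabel, rowMin_zero hA, hgr.eq_zero root_notMem_VRf]⟩
  · obtain ⟨v, hv, rfl⟩ := hgr.bijOn.surjOn ⟨hy0, hy.le.trans (hgr.le_card _)⟩
    exact ⟨v, (mem_filter.1 hv).1, relabel_snd_of_mem_VRf hA hv⟩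

lemma isNAT_image_relabel (hA : IsNAT A) (hgl : IsIncreasingLabeling (Ancestor A) (VLf A) gl)
    (hgr : IsIncreasingLabeling (Ancestor A) (VRf A) gr) : IsNAT (A.image (relabel A gl gr)) :=
  isNAT_image hA (preservesRows_relabel hA hgl hgr) (preservesColumns_relabel hA hgl hgr)
    (relabel_root hA hgl hgr) (fun _ _ _ hx => exists_relabel_fst_eq hA hgl hx)
    (fun _ _ _ hy => exists_relabel_snd_eq hA hgr hy)

lemma natIso_image_relabel (hA : IsNAT A) (hgl : IsIncreasingLabeling (Ancestor A) (VLf A) gl)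
    (hgr : IsIncreasingLabeling (Ancestor A) (VRf A) gr) : NATIso A (A.image (relabel A gl gr)) :=
  natIso_image (preservesRows_relabel hA hgl hgr) (preservesColumns_relabel hA hgl hgr)
    (relabel_root hA hgl hgr)

end Relabel

section TreeHom

variable {A A' : Finset (ℕ × ℕ)} {f g : ℕ × ℕ → ℕ × ℕ} {p u v : ℕ × ℕ}

structure IsTreeHom (A A' : Finset (ℕ × ℕ)) (f : ℕ × ℕ → ℕ × ℕ) : Prop where
  map_root : f (0, 0) = (0, 0)
  leftParent : ∀ ⦃p q⦄, LeftParent A p q → LeftParent A' (f p) (f q)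
  rightParent : ∀ ⦃p q⦄, RightParent A p q → RightParent A' (f p) (f q)

lemma isTreeHom_of_parent_iff (hroot : f (0, 0) = (0, 0))
    (hpar : ∀ p ∈ A, ∀ q ∈ A, (LeftParent A p q ↔ LeftParent A' (f p) (f q)) ∧
      (RightParent A p q ↔ RightParent A' (f p) (f q))) : IsTreeHom A A' f :=
  ⟨hroot, fun p q h => (hpar p h.1 q h.2.1).1.1 h, fun p q h => (hpar p h.1 q h.2.1).2.1 h⟩

namespace IsTreeHom

lemma ancestor (hf : IsTreeHom A A' f) (h : Ancestor A u v) : Ancestor A' (f u) (f v) :=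
  Relation.ReflTransGen.lift f (fun _ _ h => h.imp (hf.leftParent ·) (hf.rightParent ·)) _ _ h

lemma leftAncestor (hf : IsTreeHom A A' f) (h : LeftAncestor A u v) :
    LeftAncestor A' (f u) (f v) :=
  Relation.ReflTransGen.lift (r := fun x y => LeftParent A y x)
    (p := fun x y => LeftParent A' y x) f
    (fun a b (h : LeftParent A b a) => hf.leftParent h) _ _ h

lemma rightAncestor (hf : IsTreeHom A A' f) (h : RightAncestor A u v) :
    RightAncestor A' (f u) (f v) :=
  Relation.ReflTransGen.lift (r := fun x y => RightParent A y x)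
    (p := fun x y => RightParent A' y x) f
    (fun a b (h : RightParent A b a) => hf.rightParent h) _ _ h

lemma fst_colMin (hf : IsTreeHom A A' f) (hp : p ∈ A) : (f (colMin A p.1)).1 = (f p).1 :=
  (hf.rightAncestor (rightAncestor_colMin hp)).fst_eq

lemma snd_rowMin (hf : IsTreeHom A A' f) (hp : p ∈ A) : (f (rowMin A p.2)).2 = (f p).2 :=
  (hf.leftAncestor (leftAncestor_rowMin hp)).snd_eq

lemma eqOn (hA : IsNAT A) (hf : IsTreeHom A A' f) (hg : IsTreeHom A A' g) : Set.EqOn f g A := by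
  intro p hp
  have hroot := ancestor_root hA hp
  clear hp
  induction hroot with
  | refl => rw [hf.map_root, hg.map_root]
  | tail _ hpar ih =>
    rcases hpar with h | h
    · have h' := hg.leftParent h
      rw [← ih] at h'
      exact (hf.leftParent h).child_unique h'
    · have h' := hg.rightParent h
      rw [← ih] at h'
      exact (hf.rightParent h).child_unique h'

end IsTreeHom

lemma isTreeHom_relabel {gl gr : ℕ × ℕ → ℕ} (hA : IsNAT A)
    (hgl : IsIncreasingLabeling (Ancestor A) (VLf A) gl)
    (hgr : IsIncreasingLabeling (Ancestor A) (VRf A) gr) :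
    IsTreeHom A (A.image (relabel A gl gr)) (relabel A gl gr) :=
  have hrow := preservesRows_relabel hA hgl hgr
  have hcol := preservesColumns_relabel hA hgl hgr
  ⟨relabel_root hA hgl hgr, fun _ _ h => (hrow.leftParent_iff h.1 h.2.1).2 h,
    fun _ _ h => (hcol.rightParent_iff h.1 h.2.1).2 h⟩

end TreeHom

section Counting

variable {A A' : Finset (ℕ × ℕ)} {gl gr gl' gr' : ℕ × ℕ → ℕ} {φ : ℕ × ℕ → ℕ × ℕ}

lemma eq_of_image_relabel_eq (hA : IsNAT A)
    (hgl : IsIncreasingLabeling (Ancestor A) (VLf A) gl)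
    (hgr : IsIncreasingLabeling (Ancestor A) (VRf A) gr)
    (hgl' : IsIncreasingLabeling (Ancestor A) (VLf A) gl')
    (hgr' : IsIncreasingLabeling (Ancestor A) (VRf A) gr')
    (h : A.image (relabel A gl gr) = A.image (relabel A gl' gr')) : gl = gl' ∧ gr = gr' := by
  have heq := (isTreeHom_relabel hA hgl hgr).eqOn hA (h ▸ isTreeHom_relabel hA hgl' hgr')
  refine ⟨funext fun v => ?_, funext fun v => ?_⟩
  · by_cases hv : v ∈ VLf A
    · rw [← relabel_fst_of_mem_VLf (gl := gl) (gr := gr) hA hv,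
        ← relabel_fst_of_mem_VLf (gl := gl') (gr := gr') hA hv,
        heq (mem_filter.1 hv).1]
    · rw [hgl.eq_zero hv, hgl'.eq_zero hv]
  · by_cases hv : v ∈ VRf A
    · rw [← relabel_snd_of_mem_VRf (gl := gl) (gr := gr) hA hv,
        ← relabel_snd_of_mem_VRf (gl := gl') (gr := gr') hA hv,
        heq (mem_filter.1 hv).1]
    · rw [hgr.eq_zero hv, hgr'.eq_zero hv]

lemma bijOn_VLf_of_parent_iff (hbij : Set.BijOn φ A A')
    (hpar : ∀ p ∈ A, ∀ q ∈ A, (LeftParent A p q ↔ LeftParent A' (φ p) (φ q)) ∧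
      (RightParent A p q ↔ RightParent A' (φ p) (φ q))) :
    Set.BijOn φ (VLf A) (VLf A') := by
  refine ⟨fun v hv => ?_, hbij.injOn.mono fun v hv => (mem_filter.1 hv).1, fun w hw => ?_⟩
  · obtain ⟨q, hq⟩ := mem_VLf_iff_exists_leftParent.1 hv
    exact mem_VLf_iff_exists_leftParent.2 ⟨_, (hpar v hq.1 q hq.2.1).1.1 hq⟩
  · obtain ⟨q', hq'⟩ := mem_VLf_iff_exists_leftParent.1 hw
    obtain ⟨v, hv, rfl⟩ := hbij.surjOn hq'.1
    obtain ⟨q, hq, rfl⟩ := hbij.surjOn hq'.2.1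
    exact ⟨v, mem_VLf_iff_exists_leftParent.2 ⟨q, (hpar v hv q hq).1.2 hq'⟩, rfl⟩

lemma bijOn_VRf_of_parent_iff (hbij : Set.BijOn φ A A')
    (hpar : ∀ p ∈ A, ∀ q ∈ A, (LeftParent A p q ↔ LeftParent A' (φ p) (φ q)) ∧
      (RightParent A p q ↔ RightParent A' (φ p) (φ q))) :
    Set.BijOn φ (VRf A) (VRf A') := by
  refine ⟨fun v hv => ?_, hbij.injOn.mono fun v hv => (mem_filter.1 hv).1, fun w hw => ?_⟩
  · obtain ⟨q, hq⟩ := mem_VRf_iff_exists_rightParent.1 hv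
    exact mem_VRf_iff_exists_rightParent.2 ⟨_, (hpar v hq.1 q hq.2.1).2.1 hq⟩
  · obtain ⟨q', hq'⟩ := mem_VRf_iff_exists_rightParent.1 hw
    obtain ⟨v, hv, rfl⟩ := hbij.surjOn hq'.1
    obtain ⟨q, hq, rfl⟩ := hbij.surjOn hq'.2.1
    exact ⟨v, mem_VRf_iff_exists_rightParent.2 ⟨q, (hpar v hv q hq).2.2 hq'⟩, rfl⟩

lemma isIncreasingLabeling_indicator_fst (hA' : IsNAT A') (hφ : IsTreeHom A A' φ)
    (hL : Set.BijOn φ (VLf A) (VLf A')) :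
    IsIncreasingLabeling (Ancestor A) (VLf A)
      ((VLf A : Set (ℕ × ℕ)).indicator fun v => (φ v).1) := by
  have hcard : #(VLf A') = #(VLf A) := by
    rw [← Set.ncard_coe_finset, ← Set.ncard_coe_finset, hL.ncard_eq]
  refine ⟨?_, fun u v hu hv huv => ?_, fun v hv => Set.indicator_of_notMem hv _⟩
  · rw [← hcard]
    exact ((bijOn_fst_VLf hA').comp hL).congr fun v hv => (Set.indicator_of_mem hv _).symm
  · rw [Set.indicator_of_mem (mem_coe.2 hu), Set.indicator_of_mem (mem_coe.2 hv)]
    exact (Prod.le_def.1 (hφ.ancestor huv).le).1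

lemma isIncreasingLabeling_indicator_snd (hA' : IsNAT A') (hφ : IsTreeHom A A' φ)
    (hR : Set.BijOn φ (VRf A) (VRf A')) :
    IsIncreasingLabeling (Ancestor A) (VRf A)
      ((VRf A : Set (ℕ × ℕ)).indicator fun v => (φ v).2) := by
  have hcard : #(VRf A') = #(VRf A) := by
    rw [← Set.ncard_coe_finset, ← Set.ncard_coe_finset, hR.ncard_eq]
  refine ⟨?_, fun u v hu hv huv => ?_, fun v hv => Set.indicator_of_notMem hv _⟩
  · rw [← hcard]
    exact ((bijOn_snd_VRf hA').comp hR).congr fun v hv => (Set.indicator_of_mem hv _).symm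
  · rw [Set.indicator_of_mem (mem_coe.2 hu), Set.indicator_of_mem (mem_coe.2 hv)]
    exact (Prod.le_def.1 (hφ.ancestor huv).le).2

lemma exists_image_relabel_eq (hA : IsNAT A) (hA' : IsNAT A') (hiso : NATIso A A') :
    ∃ gl gr, IsIncreasingLabeling (Ancestor A) (VLf A) gl ∧
      IsIncreasingLabeling (Ancestor A) (VRf A) gr ∧ A.image (relabel A gl gr) = A' := by
  obtain ⟨φ, hbij, hroot, hpar⟩ := hiso
  have hφ : IsTreeHom A A' φ := isTreeHom_of_parent_iff hroot hpar
  set gl := (VLf A : Set (ℕ × ℕ)).indicator fun v => (φ v).1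
  set gr := (VRf A : Set (ℕ × ℕ)).indicator fun v => (φ v).2
  refine ⟨gl, gr, isIncreasingLabeling_indicator_fst hA' hφ (bijOn_VLf_of_parent_iff hbij hpar),
    isIncreasingLabeling_indicator_snd hA' hφ (bijOn_VRf_of_parent_iff hbij hpar), ?_⟩
  have heq : Set.EqOn (relabel A gl gr) φ A := fun p hp => by
    refine Prod.ext ?_ ?_
    · change gl (colMin A p.1) = _
      rw [← hφ.fst_colMin hp]
      rcases colMin_mem_insert_VLf hA hp with h | h
      · simp [gl, h, hroot, root_notMem_VLf]
      · exact Set.indicator_of_mem h _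
    · change gr (rowMin A p.2) = _
      rw [← hφ.snd_rowMin hp]
      rcases rowMin_mem_insert_VRf hA hp with h | h
      · simp [gr, h, hroot, root_notMem_VRf]
      · exact Set.indicator_of_mem h _
  apply coe_injective
  rw [coe_image, heq.image_eq, hbij.image_eq]

theorem NATcount_eq_ncard_mul_ncard (hA : IsNAT A) :
    NATcount A = {g | IsIncreasingLabeling (Ancestor A) (VLf A) g}.ncard *
      {g | IsIncreasingLabeling (Ancestor A) (VRf A) g}.ncard := by
  rw [NATcount, ← Set.ncard_prod]
  refine (Set.BijOn.ncard_eq (f := fun g => A.image (relabel A g.1 g.2)) ⟨?_, ?_, ?_⟩).symm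
  · exact fun g hg => ⟨isNAT_image_relabel hA hg.1 hg.2, natIso_image_relabel hA hg.1 hg.2⟩
  · exact fun g hg g' hg' h => Prod.ext_iff.2 (eq_of_image_relabel_eq hA hg.1 hg.2 hg'.1 hg'.2 h)
  · rintro A' ⟨hA', hiso⟩
    obtain ⟨gl, gr, hgl, hgr, rfl⟩ := exists_image_relabel_eq hA hA' hiso
    exact ⟨(gl, gr), ⟨hgl, hgr⟩, rfl⟩

lemma hookL_eq_hook (A : Finset (ℕ × ℕ)) (v : ℕ × ℕ) : hookL A v = hook (Ancestor A) (VLf A) v := by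
  rw [hookL, hook, ← Set.ncard_coe_finset, coe_filter]

lemma hookR_eq_hook (A : Finset (ℕ × ℕ)) (v : ℕ × ℕ) : hookR A v = hook (Ancestor A) (VRf A) v := by
  rw [hookR, hook, ← Set.ncard_coe_finset, coe_filter]

end Counting

theorem hook_formula_for_nats (A : Finset (ℕ × ℕ)) (hA : IsNAT A) :
    NATcount A * (∏ v ∈ VLf A, hookL A v) * (∏ v ∈ VRf A, hookR A v) =
      (VLf A).card.factorial * (VRf A).card.factorial := by
  rw [← ncard_isIncreasingLabeling_mul_prod_hook (isForestOn_ancestor hA (VLf A)),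
    ← ncard_isIncreasingLabeling_mul_prod_hook (isForestOn_ancestor hA (VRf A)),
    NATcount_eq_ncard_mul_ncard hA]
  simp only [hookL_eq_hook, hookR_eq_hook]
  ring
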